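/- arXiv:2405.06870 — 3 statements merged into one kernel-verified Lean document; each statement's English description precedes it below -/
import Mathlib

section
/- Let λ be a real with 1 < λ ≤ 2 and let a, b, c, d be vectors in {0,1}^n. Define (x ⊞ y)_i componentwise by: 0 if x_i=y_i=0, 1 if exactly one of x_i, y_i is 1, and λ if x_i=y_i=1. Then the ℓ1-distance ‖(a ⊞ b) − (c ⊞ d)‖₁ ≥ (λ−1)·‖(a+b) − (c+d)‖₁, where + is componentwise integer addition. -/
open Classical in
noncomputable def bp (lam u v : ℝ) : ℝ :=
  if u = 1 ∧ v = 1 then lam else if u = 0 ∧ v = 0 then 0 else 1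

theorem stmt3 (n : ℕ) (lam : ℝ) (hlam1 : 1 < lam) (hlam2 : lam ≤ 2)
    (a b c d : Fin n → ℝ)
    (ha : ∀ i, a i = 0 ∨ a i = 1) (hb : ∀ i, b i = 0 ∨ b i = 1)
    (hc : ∀ i, c i = 0 ∨ c i = 1) (hd : ∀ i, d i = 0 ∨ d i = 1) :
    (lam - 1) * ∑ i, |(a i + b i) - (c i + d i)| ≤
      ∑ i, |bp lam (a i) (b i) - bp lam (c i) (d i)| := by
  rw [Finset.mul_sum]
  apply Finset.sum_le_sum
  intro i _
  rcases ha i with h1 | h1 <;> rcases hb i with h2 | h2 <;>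
  rcases hc i with h3 | h3 <;> rcases hd i with h4 | h4 <;>
  norm_num [bp, h1, h2, h3, h4] <;>
  first
  | linarith
  | (rw [abs_of_nonneg (by linarith : (0:ℝ) ≤ _)]; linarith)
  | (rw [abs_of_nonpos (by linarith : _ ≤ (0:ℝ))]; linarith)
end

section
/- Let H be a k × M binary parity check matrix over GF(2) such that no nonempty set of at most 2s columns of H sums to zero (equivalently, H is the parity check matrix of a linear code with minimum distance at least 2s+1). Let G be a k × n generator matrix of an [n,k,d] binary linear code (i.e., G has full row rank k and every nonzero codeword in its row space has Hamming weight at least d). Define C = {Gᵀh_i : i ∈ [M]}, where h_i are the columns of H. Then: (1) the M vectors Gᵀh_i are pairwise distinct, so |C| = M; (2) for any two distinct nonempty subsets S, S' of C each of size at most s, the XOR-sums ⊕_{x∈S} x and ⊕_{x∈S'} x are distinct, and their Hamming distance is at least d. -/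
/-!
Write `c j` for the `j`-th column of `H`, so that the codeword attached to `j` is `c j ᵥ* G`.
Over `GF(2)` the sum of the column sums over two index sets `T`, `T'` is the column sum over
`T ∆ T'`, a set of size at most `2s` that is nonempty when `T ≠ T'`; by the hypothesis on `H`
it is nonzero. Since `G` is injective and linear, `∑ S + ∑ S'` is then a nonzero codeword, so
the two sums differ, and their distance is the weight of that codeword, which is at least `d`.
Singletons give injectivity of `j ↦ c j ᵥ* G`.
-/

open Finset Matrix
open scoped symmDiff

section ZModTwo

variable {ι V : Type*} [AddCommGroup V] [Module (ZMod 2) V]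

theorem Finset.sum_add_sum_eq_sum_symmDiff [DecidableEq ι] (s t : Finset ι) (f : ι → V) :
    ∑ i ∈ s, f i + ∑ i ∈ t, f i = ∑ i ∈ s ∆ t, f i := by
  rw [symmDiff_def, sup_eq_union, sum_union disjoint_sdiff_sdiff,
    ← sum_inter_add_sum_sdiff s t, ← sum_inter_add_sum_sdiff t s, inter_comm t s,
    add_add_add_comm, ZModModule.add_self, zero_add]

theorem hammingDist_eq_hammingNorm_add [Fintype ι] [DecidableEq V] (x y : ι → V) :
    hammingDist x y = hammingNorm (x + y) := by
  rw [hammingDist_eq_hammingNorm, ZModModule.neg_eq_self]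

variable [DecidableEq ι] {c : ι → V} {s : ℕ}

theorem sum_add_sum_ne_zero_of_forall_card_le_two_mul
    (hc : ∀ T : Finset ι, T.Nonempty → T.card ≤ 2 * s → ∑ i ∈ T, c i ≠ 0)
    {T T' : Finset ι} (hT : T.card ≤ s) (hT' : T'.card ≤ s) (hne : T ≠ T') :
    ∑ i ∈ T, c i + ∑ i ∈ T', c i ≠ 0 := by
  rw [sum_add_sum_eq_sum_symmDiff]
  refine hc _ (symmDiff_nonempty.2 hne) ?_
  calc (T ∆ T').card ≤ (T ∪ T').card := card_le_card symmDiff_subset_union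
    _ ≤ T.card + T'.card := card_union_le _ _
    _ ≤ 2 * s := by omega

theorem injective_of_forall_card_le_two_mul (hs : 1 ≤ s)
    (hc : ∀ T : Finset ι, T.Nonempty → T.card ≤ 2 * s → ∑ i ∈ T, c i ≠ 0) :
    Function.Injective c := by
  intro i j hij
  by_contra hne
  refine sum_add_sum_ne_zero_of_forall_card_le_two_mul hc (T := {i}) (T' := {j})
    (by simpa using hs) (by simpa using hs) (by simpa using hne) ?_
  simp [hij, ZModModule.add_self]

end ZModTwo

theorem stmt7 (k M n s d : ℕ) (hs : 1 ≤ s)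
    (H : Matrix (Fin k) (Fin M) (ZMod 2))
    (hH : ∀ T : Finset (Fin M), T.Nonempty → T.card ≤ 2 * s →
      (∑ j ∈ T, (fun i => H i j)) ≠ (0 : Fin k → ZMod 2))
    (G : Matrix (Fin k) (Fin n) (ZMod 2))
    (hG : Function.Injective fun h : Fin k → ZMod 2 => Matrix.vecMul h G)
    (hd : ∀ h : Fin k → ZMod 2, h ≠ 0 → d ≤ hammingDist (Matrix.vecMul h G) 0) :
    Function.Injective (fun i : Fin M => Matrix.vecMul (fun r => H r i) G) ∧
    ∀ S S' : Finset (Fin n → ZMod 2),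
      S ⊆ Finset.image (fun i : Fin M => Matrix.vecMul (fun r => H r i) G) Finset.univ →
      S' ⊆ Finset.image (fun i : Fin M => Matrix.vecMul (fun r => H r i) G) Finset.univ →
      S.Nonempty → S'.Nonempty → S.card ≤ s → S'.card ≤ s → S ≠ S' →
      (∑ x ∈ S, x) ≠ (∑ x ∈ S', x) ∧ d ≤ hammingDist (∑ x ∈ S, x) (∑ x ∈ S', x) := by
  set c : Fin M → Fin k → ZMod 2 := fun j i => H i j
  have hcode : Function.Injective fun j => c j ᵥ* G :=
    hG.comp (injective_of_forall_card_le_two_mul hs hH)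
  refine ⟨hcode, fun S S' hS hS' _ _ hcard hcard' hne => ?_⟩
  obtain ⟨T, -, rfl⟩ := subset_image_iff.1 hS
  obtain ⟨T', -, rfl⟩ := subset_image_iff.1 hS'
  rw [card_image_of_injective _ hcode] at hcard hcard'
  have hsum : ∑ x ∈ T.image (c · ᵥ* G), x + ∑ x ∈ T'.image (c · ᵥ* G), x
      = (∑ j ∈ T, c j + ∑ j ∈ T', c j) ᵥ* G := by
    rw [sum_image hcode.injOn, sum_image hcode.injOn, add_vecMul, sum_vecMul, sum_vecMul]
  have hh : ∑ j ∈ T, c j + ∑ j ∈ T', c j ≠ 0 :=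
    sum_add_sum_ne_zero_of_forall_card_le_two_mul hH hcard hcard' (fun h => hne (h ▸ rfl))
  refine ⟨fun heq => hh (hG ?_), ?_⟩
  · change _ ᵥ* G = 0 ᵥ* G
    rw [← hsum, heq, ZModModule.add_self, zero_vecMul]
  · rw [hammingDist_eq_hammingNorm_add, hsum, ← hammingDist_zero_right]
    exact hd _ hh
end

section
/- Let (V, B) be a t-(v,k,1)-packing: V has v vertices, every block in B has size k, and every t-subset of V is contained in at most one block. For s ≥ 1 with k > s(t−1), identify each block b with its characteristic vector x_b ∈ {0,1}^v. Then for any two distinct subsets S₁, S₂ of {x_b : b ∈ B}, each of size at most s, the Boolean ORs ∨_{x∈S₁} x and ∨_{x∈S₂} x have Hamming distance at least k − s(t−1). -/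
lemma stmt14_aux {α : Type*} [DecidableEq α] (V : Finset α) (B : Finset (Finset α))
    (k t s : ℕ) (ht : 1 ≤ t) (hs : 1 ≤ s)
    (hblocks : ∀ b ∈ B, b ⊆ V ∧ b.card = k)
    (hpack : ∀ T : Finset α, T ⊆ V → T.card = t → (B.filter (fun b => T ⊆ b)).card ≤ 1)
    (S₁ S₂ : Finset (Finset α)) (h₁ : S₁ ⊆ B) (h₂ : S₂ ⊆ B) (hc₂ : S₂.card ≤ s)
    (b : Finset α) (hb₁ : b ∈ S₁) (hb₂ : b ∉ S₂) :
    k - s * (t - 1) ≤ (((S₁.sup id) \ (S₂.sup id)) ∪ ((S₂.sup id) \ (S₁.sup id))).card := by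
  have hinter : ∀ b' ∈ B, b' ≠ b → (b ∩ b').card ≤ t - 1 := by
    intro b' hb' hne
    by_contra h
    push_neg at h
    have htle : t ≤ (b ∩ b').card := by omega
    obtain ⟨T, hTsub, hTcard⟩ := Finset.exists_subset_card_eq htle
    have hbB : b ∈ B := h₁ hb₁
    have hTV : T ⊆ V := hTsub.trans ((Finset.inter_subset_left).trans (hblocks b hbB).1)
    have h1 := hpack T hTV hTcard
    have h2 : 1 < (B.filter (fun c => T ⊆ c)).card := by
      apply Finset.one_lt_card.2
      refine ⟨b, ?_, b', ?_, hne.symm⟩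
      · exact Finset.mem_filter.2 ⟨hbB, hTsub.trans Finset.inter_subset_left⟩
      · exact Finset.mem_filter.2 ⟨hb', hTsub.trans Finset.inter_subset_right⟩
    omega
  have hsub : b \ (S₂.sup id) ⊆ ((S₁.sup id) \ (S₂.sup id)) ∪ ((S₂.sup id) \ (S₁.sup id)) := by
    intro x hx
    rw [Finset.mem_sdiff] at hx
    exact Finset.mem_union_left _ (Finset.mem_sdiff.2
      ⟨Finset.mem_sup.2 ⟨b, hb₁, hx.1⟩, hx.2⟩)
  have hintersub : b ∩ (S₂.sup id) ⊆ S₂.biUnion (fun b' => b ∩ b') := by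
    intro x hx
    rw [Finset.mem_inter, Finset.mem_sup] at hx
    obtain ⟨hxb, b', hb', hxb'⟩ := hx
    exact Finset.mem_biUnion.2 ⟨b', hb', Finset.mem_inter.2 ⟨hxb, hxb'⟩⟩
  have hcard : (b ∩ (S₂.sup id)).card ≤ s * (t - 1) := by
    calc (b ∩ (S₂.sup id)).card ≤ (S₂.biUnion (fun b' => b ∩ b')).card :=
          Finset.card_le_card hintersub
      _ ≤ ∑ b' ∈ S₂, (b ∩ b').card := Finset.card_biUnion_le
      _ ≤ ∑ _b' ∈ S₂, (t - 1) := by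
          refine Finset.sum_le_sum fun b' hb' => hinter b' (h₂ hb') ?_
          rintro rfl; exact hb₂ hb'
      _ = S₂.card * (t - 1) := by rw [Finset.sum_const, smul_eq_mul]
      _ ≤ s * (t - 1) := Nat.mul_le_mul_right _ hc₂
  have hkey : (b ∩ (S₂.sup id)).card + (b \ (S₂.sup id)).card = b.card :=
    Finset.card_inter_add_card_sdiff _ _
  have hbk : b.card = k := (hblocks b (h₁ hb₁)).2
  have := Finset.card_le_card hsub
  omega

theorem stmt14 {α : Type*} [DecidableEq α] (V : Finset α) (B : Finset (Finset α))
    (k t s : ℕ) (ht : 1 ≤ t) (hs : 1 ≤ s)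
    (hblocks : ∀ b ∈ B, b ⊆ V ∧ b.card = k)
    (hpack : ∀ T : Finset α, T ⊆ V → T.card = t → (B.filter (fun b => T ⊆ b)).card ≤ 1)
    (hks : s * (t - 1) < k) :
    ∀ S₁ S₂ : Finset (Finset α), S₁ ⊆ B → S₂ ⊆ B → S₁.card ≤ s → S₂.card ≤ s → S₁ ≠ S₂ →
      k - s * (t - 1) ≤ (((S₁.sup id) \ (S₂.sup id)) ∪ ((S₂.sup id) \ (S₁.sup id))).card := by
  intro S₁ S₂ h₁ h₂ hc₁ hc₂ hne
  by_cases h : S₁ ⊆ S₂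
  · by_cases h' : S₂ ⊆ S₁
    · exact absurd (Finset.Subset.antisymm h h') hne
    · obtain ⟨b, hb₂, hb₁⟩ := Finset.not_subset.1 h'
      have := stmt14_aux V B k t s ht hs hblocks hpack S₂ S₁ h₂ h₁ hc₁ b hb₂ hb₁
      rwa [Finset.union_comm] at this
  · obtain ⟨b, hb₁, hb₂⟩ := Finset.not_subset.1 h
    exact stmt14_aux V B k t s ht hs hblocks hpack S₁ S₂ h₁ h₂ hc₂ b hb₁ hb₂
end
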